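/- If X ~ N(μ, s²) with s > 0 and |μ| ≤ ρ_U, then E[max{ζ(X), 0}] ≥ (ρ_L²/(2σ²))·[erf(2ρ_U/(√2 s)) − erf((ρ_L+ρ_U)/(√2 s))], where ζ is the piecewise RGCUSUM statistic and s = σ‖p‖₂. -/

import Mathlib

open MeasureTheory ProbabilityTheory NNReal

noncomputable def erf (x : ℝ) : ℝ :=
  (2 / Real.sqrt Real.pi) * ∫ t in (0 : ℝ)..x, Real.exp (-t ^ 2)

noncomputable def zeta (σ ρL ρU x : ℝ) : ℝ :=
  if ρL ≤ |x| ∧ |x| ≤ ρU then x ^ 2 / (2 * σ ^ 2)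
  else if |x| < ρL then (2 * |x| * ρL - ρL ^ 2) / (2 * σ ^ 2)
  else (2 * |x| * ρU - ρU ^ 2) / (2 * σ ^ 2)

/-! On the event `ρL ≤ |X| ≤ ρU` the statistic `ζ(X)` is at least `ρL² / (2σ²)`, so the
expectation is at least this constant times the probability of the event. Each of the intervals
`±[ρL, ρU]` has probability at least `P(Z ∈ [ρL + ρU, 2ρU])` for `Z ~ N(0, s²)`: translating by
`ρU` moves the mean into `[0, 2ρU]`, closer to every point of `[ρL + ρU, 2ρU]` than `0` is.
Twice such a centred Gaussian probability is the difference of `erf` values in the statement.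
Integrability comes from `ζ(x) ≤ x² / (2σ²)`. -/

open Real Set

lemma erf_div_sub_erf_div {s : ℝ} (hs : 0 < s) {v : ℝ≥0} (hv : (v : ℝ) = s ^ 2) (a b : ℝ) :
    erf (b / (√2 * s)) - erf (a / (√2 * s)) = 2 * ∫ u in a..b, gaussianPDFReal 0 v u := by
  have hexp : ∀ x y : ℝ, IntervalIntegrable (fun t : ℝ => exp (-t ^ 2)) volume x y :=
    fun x y => (by fun_prop : Continuous fun t : ℝ => exp (-t ^ 2)).intervalIntegrable x y
  have hsqrt : √(2 * π * s ^ 2) = √2 * √π * s := by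
    rw [sqrt_mul (by positivity), sqrt_mul zero_le_two, sqrt_sq hs.le]
  have hexponent : ∀ u : ℝ, -(u / (√2 * s)) ^ 2 = -(u - 0) ^ 2 / (2 * (v : ℝ)) := fun u => by
    rw [hv, div_pow, mul_pow, sq_sqrt zero_le_two]
    ring
  unfold erf
  rw [← mul_sub, intervalIntegral.integral_interval_sub_left (hexp 0 _) (hexp 0 _),
    ← intervalIntegral.inv_smul_integral_comp_div]
  simp only [gaussianPDFReal, hexponent, intervalIntegral.integral_const_mul, smul_eq_mul, hv,
    hsqrt]
  field_simp

lemma measureReal_Icc_gaussianReal (μ : ℝ) {v : ℝ≥0} (hv : v ≠ 0) {a b : ℝ} (hab : a ≤ b) :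
    (gaussianReal μ v).real (Icc a b) = ∫ x in a..b, gaussianPDFReal μ v x := by
  rw [measureReal_def, gaussianReal_apply_eq_integral μ hv, ENNReal.toReal_ofReal
    (setIntegral_nonneg measurableSet_Icc fun x _ => gaussianPDFReal_nonneg μ v x),
    integral_Icc_eq_integral_Ioc, ← intervalIntegral.integral_of_le hab]

lemma measureReal_Icc_neg_gaussianReal (μ : ℝ) (v : ℝ≥0) (a b : ℝ) :
    (gaussianReal μ v).real (Icc (-b) (-a)) = (gaussianReal (-μ) v).real (Icc a b) := by
  rw [← gaussianReal_map_neg, map_measureReal_apply (by fun_prop) measurableSet_Icc]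
  congr 1
  exact (neg_Icc a b).symm

lemma setOf_abs_mem_Icc {a b : ℝ} (ha : 0 ≤ a) :
    {x : ℝ | a ≤ |x| ∧ |x| ≤ b} = Icc a b ∪ Icc (-b) (-a) := by
  ext x
  simp only [mem_union, mem_Icc, mem_ofPred_eq]
  cases abs_cases x <;> grind

lemma measureReal_abs_mem_Icc_gaussianReal (μ : ℝ) {v : ℝ≥0} (hv : v ≠ 0) {ρL ρU : ℝ}
    (hL : 0 < ρL) (hLU : ρL ≤ ρU) :
    (gaussianReal μ v).real {x | ρL ≤ |x| ∧ |x| ≤ ρU}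
      = (∫ x in ρL..ρU, gaussianPDFReal μ v x) + ∫ x in ρL..ρU, gaussianPDFReal (-μ) v x := by
  have hdisj : Disjoint (Icc ρL ρU) (Icc (-ρU) (-ρL)) :=
    disjoint_left.mpr fun x hA hB => by linarith [hA.1, hB.2]
  rw [setOf_abs_mem_Icc hL.le, measureReal_union hdisj measurableSet_Icc,
    measureReal_Icc_neg_gaussianReal, measureReal_Icc_gaussianReal μ hv hLU,
    measureReal_Icc_gaussianReal (-μ) hv hLU]

lemma integral_gaussianPDFReal_zero_le (v : ℝ≥0) {μ ρL ρU : ℝ} (hL : 0 ≤ ρL) (hLU : ρL ≤ ρU)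
    (hμ : |μ| ≤ ρU) :
    ∫ u in (ρL + ρU)..(2 * ρU), gaussianPDFReal 0 v u ≤ ∫ x in ρL..ρU, gaussianPDFReal μ v x := by
  obtain ⟨hμL, hμU⟩ := abs_le.mp hμ
  have hshift : ∫ x in ρL..ρU, gaussianPDFReal μ v x
      = ∫ u in (ρL + ρU)..(2 * ρU), gaussianPDFReal μ v (u - ρU) := by
    rw [intervalIntegral.integral_comp_sub_right, add_sub_cancel_right, two_mul,
      add_sub_cancel_right]
  rw [hshift]
  refine intervalIntegral.integral_mono_on (by linarith)
    (integrable_gaussianPDFReal 0 v).intervalIntegrable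
    ((integrable_gaussianPDFReal μ v).comp_sub_right ρU).intervalIntegrable fun u hu => ?_
  have hsq : (u - ρU - μ) ^ 2 ≤ (u - 0) ^ 2 := by
    nlinarith [hu.1,
      mul_nonneg (by linarith : 0 ≤ ρU + μ) (by linarith [hu.1] : 0 ≤ 2 * u - ρU - μ)]
  simp only [gaussianPDFReal]
  gcongr

lemma zeta_le_sq_div (σ ρL ρU x : ℝ) : zeta σ ρL ρU x ≤ x ^ 2 / (2 * σ ^ 2) := by
  unfold zeta
  split_ifs
  · exact le_rfl
  all_goals gcongr
  · nlinarith [sq_nonneg (|x| - ρL), sq_abs x]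
  · nlinarith [sq_nonneg (|x| - ρU), sq_abs x]

lemma sq_div_le_zeta {σ ρL ρU x : ℝ} (hL : 0 ≤ ρL) (hx : ρL ≤ |x| ∧ |x| ≤ ρU) :
    ρL ^ 2 / (2 * σ ^ 2) ≤ zeta σ ρL ρU x := by
  rw [zeta, if_pos hx, ← sq_abs x]
  gcongr
  exact hx.1

lemma measurable_zeta (σ ρL ρU : ℝ) : Measurable (zeta σ ρL ρU) := by
  unfold zeta
  refine Measurable.ite ?_ (by fun_prop) (Measurable.ite ?_ (by fun_prop) (by fun_prop))
  · exact (measurableSet_le measurable_const measurable_id.abs).inter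
      (measurableSet_le measurable_id.abs measurable_const)
  · exact measurableSet_lt measurable_id.abs measurable_const

lemma integrable_max_zeta_gaussianReal (σ ρL ρU μ : ℝ) (v : ℝ≥0) :
    Integrable (fun x => max (zeta σ ρL ρU x) 0) (gaussianReal μ v) := by
  refine (((memLp_id_gaussianReal 2).integrable_sq).div_const (2 * σ ^ 2)).mono'
    ((measurable_zeta σ ρL ρU).max measurable_const).aestronglyMeasurable (ae_of_all _ fun x => ?_)
  rw [Real.norm_of_nonneg (le_max_right _ _)]
  exact max_le (zeta_le_sq_div σ ρL ρU x) (by positivity)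

lemma mul_measureReal_le_integral {α : Type*} [MeasurableSpace α] {P : Measure α}
    [IsFiniteMeasure P] {f : α → ℝ} {S : Set α} {c : ℝ} (hS : MeasurableSet S)
    (hf : Integrable f P) (hf0 : 0 ≤ f) (hc : ∀ x ∈ S, c ≤ f x) : c * P.real S ≤ ∫ x, f x ∂P :=
  (setIntegral_ge_of_const_le_real hS (measure_ne_top _ _) hc hf.integrableOn).trans
    (setIntegral_le_integral hf (ae_of_all _ hf0))

theorem stmt9_general (μ s σ ρL ρU : ℝ) (hs : 0 < s) (hL : 0 < ρL)
    (hLU : ρL ≤ ρU) (hμ : |μ| ≤ ρU) (v : ℝ≥0) (hv : (v : ℝ) = s ^ 2) :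
    (ρL ^ 2 / (2 * σ ^ 2)) *
        (erf (2 * ρU / (Real.sqrt 2 * s)) - erf ((ρL + ρU) / (Real.sqrt 2 * s))) ≤
      ∫ x, max (zeta σ ρL ρU x) 0 ∂(gaussianReal μ v) := by
  have hv0 : v ≠ 0 := by
    rintro rfl
    simp only [NNReal.coe_zero] at hv
    exact (pow_pos hs 2).ne hv
  have hS : MeasurableSet {x : ℝ | ρL ≤ |x| ∧ |x| ≤ ρU} := by
    rw [setOf_abs_mem_Icc hL.le]
    exact measurableSet_Icc.union measurableSet_Icc
  calc ρL ^ 2 / (2 * σ ^ 2) * (erf (2 * ρU / (√2 * s)) - erf ((ρL + ρU) / (√2 * s)))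
      = ρL ^ 2 / (2 * σ ^ 2) * (2 * ∫ u in (ρL + ρU)..(2 * ρU), gaussianPDFReal 0 v u) := by
        rw [erf_div_sub_erf_div hs hv]
    _ ≤ ρL ^ 2 / (2 * σ ^ 2) * (gaussianReal μ v).real {x | ρL ≤ |x| ∧ |x| ≤ ρU} := by
        rw [measureReal_abs_mem_Icc_gaussianReal μ hv0 hL hLU]
        gcongr
        linarith [integral_gaussianPDFReal_zero_le v hL.le hLU hμ,
          integral_gaussianPDFReal_zero_le v hL.le hLU (μ := -μ) (by rwa [abs_neg])]
    _ ≤ ∫ x, max (zeta σ ρL ρU x) 0 ∂(gaussianReal μ v) :=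
        mul_measureReal_le_integral hS (integrable_max_zeta_gaussianReal σ ρL ρU μ v)
          (fun _ => le_max_right _ _) fun x hx => le_max_of_le_left (sq_div_le_zeta hL.le hx)

theorem stmt9 (μ s σ ρL ρU : ℝ) (hσ : 0 < σ) (hs : 0 < s) (hL : 0 < ρL)
    (hLU : ρL ≤ ρU) (hμ : |μ| ≤ ρU) (v : ℝ≥0) (hv : (v : ℝ) = s ^ 2) :
    (ρL ^ 2 / (2 * σ ^ 2)) *
        (erf (2 * ρU / (Real.sqrt 2 * s)) - erf ((ρL + ρU) / (Real.sqrt 2 * s))) ≤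
      ∫ x, max (zeta σ ρL ρU x) 0 ∂(gaussianReal μ v) :=
  stmt9_general μ s σ ρL ρU hs hL hLU hμ v hv
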